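/- arXiv:1412.7512 — 2 statements merged into one kernel-verified Lean document; each statement's English description precedes it below -/
import Mathlib

section
/- Let β_{1−ε}(X^l, q) denote the Neyman–Pearson beta function between the channel law f_{Y^l|X^l}(·|X^l) and an auxiliary output density q. If both the channel law and q are invariant under the simultaneous/respective unitary transformations f_{Y|X}(Y | V^H X) = f_{Y|X}(V Y | X) and q(VY) = q(Y) for every unitary V, then β_{1−ε}(X^l, q) depends on the codeword X^l = [X_1,...,X_l] only through the eigenvalues of X_k X_k^H, k = 1,...,l. -/
open Matrix MeasureTheory

noncomputable instance matMeasurableSpace (n m : ℕ) : MeasurableSpace (Matrix (Fin n) (Fin m) ℂ) :=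
  inferInstanceAs (MeasurableSpace (Fin n → Fin m → ℂ))

/-- The Neyman–Pearson beta function: `β_α(P,Q) = inf { Q(A) : A measurable, P(A) ≥ α }`. -/
noncomputable def npBeta {Ω : Type*} [MeasurableSpace Ω] (α : ENNReal) (P Q : Measure Ω) :
    ENNReal :=
  ⨅ (A : Set Ω) (_ : MeasurableSet A) (_ : α ≤ P A), Q A

/-! The unitaries `V_k` relating `X_k X_kᴴ` to `X'_k X'_kᴴ` turn the channel law of `X^l`
into that of `X'^l` and fix the product auxiliary law. Blockwise left multiplication by the
`V_k` is a measurable bijection, and measurable bijections transport Neyman–Pearson tests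
in both directions without changing their error probabilities. -/

instance matBorelSpace (n m : ℕ) : BorelSpace (Matrix (Fin n) (Fin m) ℂ) :=
  inferInstanceAs (BorelSpace (Fin n → Fin m → ℂ))

lemma npBeta_le_npBeta_map {Ω Ω' : Type*} [MeasurableSpace Ω] [MeasurableSpace Ω']
    (α : ENNReal) (P Q : Measure Ω) {f : Ω → Ω'} (hf : Measurable f) :
    npBeta α P Q ≤ npBeta α (P.map f) (Q.map f) := by
  refine le_iInf₂ fun A hA => le_iInf fun hPA => ?_
  rw [Measure.map_apply hf hA] at hPA ⊢
  exact iInf₂_le_of_le (f ⁻¹' A) (hf hA) (iInf_le _ hPA)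

lemma npBeta_map_measurableEquiv {Ω Ω' : Type*} [MeasurableSpace Ω] [MeasurableSpace Ω']
    (α : ENNReal) (P Q : Measure Ω) (e : Ω ≃ᵐ Ω') :
    npBeta α (P.map e) (Q.map e) = npBeta α P Q := by
  refine le_antisymm ?_ (npBeta_le_npBeta_map α P Q e.measurable)
  calc npBeta α (P.map e) (Q.map e)
      ≤ npBeta α ((P.map e).map e.symm) ((Q.map e).map e.symm) :=
        npBeta_le_npBeta_map α _ _ e.symm.measurable
    _ = npBeta α P Q := by rw [e.map_symm_map, e.map_symm_map]

lemma npBeta_eq_of_measurePreserving {Ω Ω' : Type*} [MeasurableSpace Ω] [MeasurableSpace Ω']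
    (α : ENNReal) {P Q : Measure Ω} {P' Q' : Measure Ω'} (e : Ω ≃ᵐ Ω')
    (hP : MeasurePreserving e P P') (hQ : MeasurePreserving e Q Q') :
    npBeta α P Q = npBeta α P' Q' := by
  rw [← hP.map_eq, ← hQ.map_eq, npBeta_map_measurableEquiv]

def unitaryMulLeft {n r : ℕ} (V : Matrix.unitaryGroup (Fin n) ℂ) :
    Matrix (Fin n) (Fin r) ℂ ≃ᵐ Matrix (Fin n) (Fin r) ℂ where
  toFun Y := (V : Matrix (Fin n) (Fin n) ℂ) * Y
  invFun Y := (star V : Matrix (Fin n) (Fin n) ℂ) * Y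
  left_inv Y := by simp [← Matrix.mul_assoc]
  right_inv Y := by simp [← Matrix.mul_assoc]
  measurable_toFun := (continuous_const.matrix_mul continuous_id).measurable
  measurable_invFun := (continuous_const.matrix_mul continuous_id).measurable

lemma mul_mul_conjTranspose_mul {m n R : Type*} [Fintype m] [Fintype n] [Semiring R] [StarRing R]
    (V : Matrix m m R) (X : Matrix m n R) : V * X * (V * X)ᴴ = V * (X * Xᴴ) * Vᴴ := by
  simp only [conjTranspose_mul, Matrix.mul_assoc]

/-- Equality of the eigenvalues of the Hermitian matrices `X_k X_kᴴ` and `X'_k X'_kᴴ` is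
expressed as their unitary similarity. -/
theorem npBeta_depends_only_on_eigenvalues
    (l nc mt r : ℕ)
    (Pb : Matrix (Fin nc) (Fin mt) ℂ → Measure (Matrix (Fin nc) (Fin r) ℂ))
    (Qb : Measure (Matrix (Fin nc) (Fin r) ℂ))
    (hPprob : ∀ X, IsProbabilityMeasure (Pb X)) [IsProbabilityMeasure Qb]
    (hPinv : ∀ V ∈ Matrix.unitaryGroup (Fin nc) ℂ, ∀ X,
      Pb (V * X) = Measure.map (fun Y => V * Y) (Pb X))
    (hPgram : ∀ X X' : Matrix (Fin nc) (Fin mt) ℂ, X * Xᴴ = X' * X'ᴴ → Pb X = Pb X')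
    (hQinv : ∀ V ∈ Matrix.unitaryGroup (Fin nc) ℂ,
      Measure.map (fun Y => V * Y) Qb = Qb)
    (X X' : Fin l → Matrix (Fin nc) (Fin mt) ℂ)
    (hsim : ∀ k : Fin l, ∃ V ∈ Matrix.unitaryGroup (Fin nc) ℂ,
      X' k * (X' k)ᴴ = V * (X k * (X k)ᴴ) * Vᴴ)
    (α : ENNReal) :
    npBeta α (Measure.pi fun k => Pb (X k)) (Measure.pi fun _ => Qb) =
      npBeta α (Measure.pi fun k => Pb (X' k)) (Measure.pi fun _ => Qb) := by
  choose V hV hVsim using hsim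
  let U : Fin l → Matrix.unitaryGroup (Fin nc) ℂ := fun k => ⟨V k, hV k⟩
  have hP : ∀ k, MeasurePreserving (unitaryMulLeft (U k)) (Pb (X k)) (Pb (X' k)) := fun k =>
    ⟨(unitaryMulLeft (U k)).measurable, by
      rw [hPgram (X' k) (V k * X k) (by rw [hVsim k, mul_mul_conjTranspose_mul]),
        hPinv (V k) (hV k)]
      rfl⟩
  have hQ : ∀ k, MeasurePreserving (unitaryMulLeft (U k)) Qb Qb := fun k =>
    ⟨(unitaryMulLeft (U k)).measurable, hQinv (V k) (hV k)⟩
  have := hPprob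
  exact npBeta_eq_of_measurePreserving α (.piCongrRight fun k => unitaryMulLeft (U k))
    (measurePreserving_pi _ _ hP) (measurePreserving_pi _ _ hQ)
end

section
/- The Neyman–Pearson beta function lower bound: for probability measures P and Q with ln(dP/dQ) well defined, and any λ ∈ ℝ and α ∈ (0,1), β_α(P,Q) ≥ e^{−λ}( α − P{ ln(dP/dQ) > λ } ), equivalently β_{1−ε}(P,Q) ≥ e^{−λ}( P{ ln(dP/dQ) ≤ λ } − ε ). -/
/-!
Split a test set `A` along the event `{dP/dQ ≤ c}`: on that part `P ≤ c • Q`, and the rest has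
`P`-mass at most `P {c < dP/dQ}`. Hence `P A ≤ c Q A + P {c < dP/dQ}` for every `A`, and every
`A` with `α ≤ P A` has `Q A ≥ c⁻¹ (α - P {c < dP/dQ})`. Take `c = e^λ`.
-/

open MeasureTheory

open scoped ENNReal

section

variable {Ω : Type*} [MeasurableSpace Ω] {Q : Measure Ω} {g : Ω → ℝ≥0∞}

theorem withDensity_apply_le_mul_add (hg : Measurable g) (c : ℝ≥0∞) {A : Set Ω}
    (hA : MeasurableSet A) :
    Q.withDensity g A ≤ c * Q A + Q.withDensity g {ω | c < g ω} := by
  have hle : MeasurableSet {ω | g ω ≤ c} := measurableSet_le hg measurable_const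
  have hsplit : A ⊆ (A ∩ {ω | g ω ≤ c}) ∪ {ω | c < g ω} := fun ω hω =>
    (le_or_gt (g ω) c).imp (fun h => ⟨hω, h⟩) id
  have hlow : Q.withDensity g (A ∩ {ω | g ω ≤ c}) ≤ c * Q A :=
    calc Q.withDensity g (A ∩ {ω | g ω ≤ c})
        = ∫⁻ ω in A ∩ {ω | g ω ≤ c}, g ω ∂Q := withDensity_apply _ (hA.inter hle)
      _ ≤ ∫⁻ _ in A ∩ {ω | g ω ≤ c}, c ∂Q := setLIntegral_mono measurable_const fun _ hω => hω.2
      _ = c * Q (A ∩ {ω | g ω ≤ c}) := setLIntegral_const _ _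
      _ ≤ c * Q A := by gcongr; exact Set.inter_subset_left
  calc Q.withDensity g A
      ≤ Q.withDensity g (A ∩ {ω | g ω ≤ c}) + Q.withDensity g {ω | c < g ω} :=
        (measure_mono hsplit).trans (measure_union_le _ _)
    _ ≤ c * Q A + Q.withDensity g {ω | c < g ω} := by gcongr

theorem inv_mul_tsub_le_npBeta (hg : Measurable g) {c : ℝ≥0∞} (hc₀ : c ≠ 0) (hc : c ≠ ∞)
    (α : ℝ≥0∞) :
    c⁻¹ * (α - Q.withDensity g {ω | c < g ω}) ≤ npBeta α (Q.withDensity g) Q := by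
  refine le_iInf₂ fun A hA => le_iInf fun hαA => ?_
  rw [ENNReal.inv_mul_le_iff hc₀ hc, tsub_le_iff_right]
  exact hαA.trans (withDensity_apply_le_mul_add hg c hA)

end

theorem npBeta_lower_bound_general
    {Ω : Type*} [MeasurableSpace Ω] (P Q : Measure Ω)
    [IsProbabilityMeasure P]
    (f : Ω → ℝ) (hf : Measurable f)
    (hdens : P = Q.withDensity fun ω => ENNReal.ofReal (Real.exp (f ω)))
    (lam α : ℝ) :
    ENNReal.ofReal (Real.exp (-lam) * (α - (P {ω | lam < f ω}).toReal)) ≤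
      npBeta (ENNReal.ofReal α) P Q ∧
    ∀ ε : ℝ, ε = 1 - α →
      ENNReal.ofReal (Real.exp (-lam) * ((P {ω | f ω ≤ lam}).toReal - ε)) ≤
        npBeta (ENNReal.ofReal (1 - ε)) P Q := by
  have htail : {ω | ENNReal.ofReal (Real.exp lam) < ENNReal.ofReal (Real.exp (f ω))} =
      {ω | lam < f ω} := by
    ext ω
    simp only [Set.mem_ofPred, ENNReal.ofReal_lt_ofReal_iff (Real.exp_pos _), Real.exp_lt_exp]
  have hbound : ENNReal.ofReal (Real.exp (-lam) * (α - (P {ω | lam < f ω}).toReal)) ≤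
      npBeta (ENNReal.ofReal α) P Q := by
    have hg : Measurable fun ω => ENNReal.ofReal (Real.exp (f ω)) := by fun_prop
    have h := inv_mul_tsub_le_npBeta (Q := Q) hg
      (ENNReal.ofReal_pos.mpr (Real.exp_pos lam)).ne' ENNReal.ofReal_ne_top (ENNReal.ofReal α)
    rw [← hdens, htail, ← ENNReal.ofReal_inv_of_pos (Real.exp_pos _), ← Real.exp_neg] at h
    rwa [ENNReal.ofReal_mul (Real.exp_nonneg _), ENNReal.ofReal_sub _ ENNReal.toReal_nonneg,
      ENNReal.ofReal_toReal (measure_ne_top _ _)]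
  refine ⟨hbound, fun ε hε => ?_⟩
  have hcompl : (P {ω | f ω ≤ lam}).toReal = 1 - (P {ω | lam < f ω}).toReal := by
    simpa only [measureReal_def, Set.compl_ofPred, not_lt] using
      probReal_compl_eq_one_sub (μ := P) (measurableSet_lt measurable_const hf)
  rw [hcompl, hε, show (1 : ℝ) - (1 - α) = α by ring]
  convert hbound using 3
  ring

/-- Neyman–Pearson beta function lower bound: if `f = ln(dP/dQ)` (expressed via
`P = Q.withDensity (exp ∘ f)`), then for any `λ ∈ ℝ` and `α ∈ (0,1)`,
`β_α(P,Q) ≥ e^{−λ}(α − P{f > λ})`; equivalently, with `α = 1 − ε`,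
`β_{1−ε}(P,Q) ≥ e^{−λ}(P{f ≤ λ} − ε)`. -/
theorem npBeta_lower_bound
    {Ω : Type*} [MeasurableSpace Ω] (P Q : Measure Ω)
    [IsProbabilityMeasure P] [IsProbabilityMeasure Q]
    (f : Ω → ℝ) (hf : Measurable f)
    (hdens : P = Q.withDensity fun ω => ENNReal.ofReal (Real.exp (f ω)))
    (lam α : ℝ) (hα : 0 < α) (hα1 : α < 1) :
    ENNReal.ofReal (Real.exp (-lam) * (α - (P {ω | lam < f ω}).toReal)) ≤
      npBeta (ENNReal.ofReal α) P Q ∧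
    ∀ ε : ℝ, ε = 1 - α →
      ENNReal.ofReal (Real.exp (-lam) * ((P {ω | f ω ≤ lam}).toReal - ε)) ≤
        npBeta (ENNReal.ofReal (1 - ε)) P Q :=
  npBeta_lower_bound_general P Q f hf hdens lam α
end
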